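/- arXiv:2206.15405 — 7 statements merged into one kernel-verified Lean document; each statement's English description precedes it below -/
import Mathlib

section
/- Let m ≥ 3 be an odd natural number. In the group of permutations of ZMod m (residues modulo m), the cyclic shift c defined by c(x) = x + 1 satisfies c = (∏_{l=2}^{⌈m/2⌉} swap(l, m+2−l)) ∘ (∏_{k=1}^{⌊m/2⌋} swap(k, m+1−k)), where all entries are taken modulo m, swap(a,b) denotes the transposition exchanging a and b, and within each of the two products the transpositions are pairwise disjoint (they move pairwise disjoint pairs of points), so each product is independent of the order of its factors. The composition is function composition: the product over k is applied first, then the product over l. -/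
private lemma myProdFix {α : Type*} (l : List (Equiv.Perm α)) (x : α)
    (h : ∀ σ ∈ l, σ x = x) : l.prod x = x := by
  induction l with
  | nil => simp
  | cons a t ih =>
    rw [List.prod_cons, Equiv.Perm.mul_apply, ih (fun σ hσ => h σ (List.mem_cons_of_mem _ hσ))]
    exact h a List.mem_cons_self

private lemma myProdApply {α : Type*} : ∀ {l : List (Equiv.Perm α)},
    l.Pairwise Equiv.Perm.Disjoint → ∀ {σ}, σ ∈ l → ∀ {x}, σ x ≠ x → l.prod x = σ x := by
  intro l
  induction l with
  | nil => simp
  | cons a t ih =>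
    intro hp σ hσ x hx
    rw [List.pairwise_cons] at hp
    rw [List.prod_cons, Equiv.Perm.mul_apply]
    rcases List.mem_cons.mp hσ with rfl | hmem
    · have ht : t.prod x = x :=
        myProdFix _ _ (fun τ hτ => ((hp.1 τ hτ) x).resolve_left hx)
      rw [ht]
    · rw [ih hp.2 hmem hx]
      have h2 : σ (σ x) ≠ σ x := fun h => hx (σ.injective h)
      exact ((hp.1 σ hmem) (σ x)).resolve_right h2

private lemma mySwapDisj {α : Type*} [DecidableEq α] {p q r s : α}
    (h1 : p ≠ r) (h2 : p ≠ s) (h3 : q ≠ r) (h4 : q ≠ s) :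
    (Equiv.swap p q).Disjoint (Equiv.swap r s) := by
  intro x
  by_cases hp : x = p
  · subst hp; right; exact Equiv.swap_apply_of_ne_of_ne h1 h2
  by_cases hq : x = q
  · subst hq; right; exact Equiv.swap_apply_of_ne_of_ne h3 h4
  · left; exact Equiv.swap_apply_of_ne_of_ne hp hq

private lemma myCastEq (m : ℕ) (hm : 0 < m) {u v : ℕ} (hu : u < 2 * m) (hv : v < 2 * m) :
    ((u : ZMod m) = (v : ZMod m)) ↔ (u = v ∨ u = v + m ∨ v = u + m) := by
  rw [ZMod.natCast_eq_natCast_iff]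
  constructor
  · intro h
    rcases le_total u v with hle | hle
    · obtain ⟨c, hc⟩ := (Nat.modEq_iff_dvd' hle).mp h
      have hc2 : c < 2 := by
        by_contra hcon
        push_neg at hcon
        have : 2 * m ≤ m * c := by nlinarith
        omega
      interval_cases c <;> omega
    · obtain ⟨c, hc⟩ := (Nat.modEq_iff_dvd' hle).mp h.symm
      have hc2 : c < 2 := by
        by_contra hcon
        push_neg at hcon
        have : 2 * m ≤ m * c := by nlinarith
        omega
      interval_cases c <;> omega
  · rintro (rfl | rfl | h)
    · rfl
    · simp [Nat.ModEq, Nat.add_mod_right]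
    · subst h; simp [Nat.ModEq, Nat.add_mod_right]

private lemma myCastSub (m a v : ℕ) (h : v ≤ m + a) :
    ((m + a - v : ℕ) : ZMod m) = (a : ZMod m) - (v : ZMod m) := by
  rw [Nat.cast_sub h, Nat.cast_add, ZMod.natCast_self, zero_add]

private lemma myMainAux (m n a : ℕ) (hm : m = 2 * n + 1) (hn : 1 ≤ n)
    (ha : 1 ≤ a) (ha2 : a ≤ 2) :
    (((List.range' a n).map fun k : ℕ =>
        Equiv.swap (k : ZMod m) ((m + a - k : ℕ) : ZMod m)).Pairwise Equiv.Perm.Disjoint) ∧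
    ∀ x : ZMod m, (((List.range' a n).map fun k : ℕ =>
        Equiv.swap (k : ZMod m) ((m + a - k : ℕ) : ZMod m)).prod) x = (a : ZMod m) - x := by
  haveI : NeZero m := ⟨by omega⟩
  have hmpos : 0 < m := by omega
  have hA : ((List.range' a n).map fun k : ℕ =>
      Equiv.swap (k : ZMod m) ((m + a - k : ℕ) : ZMod m)).Pairwise Equiv.Perm.Disjoint := by
    rw [List.pairwise_map]
    refine (List.nodup_range' (s := a) (n := n)).pairwise_of_forall_ne ?_
    intro k hk k' hk' hne
    rw [List.mem_range'_1] at hk hk'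
    refine mySwapDisj ?_ ?_ ?_ ?_
    · intro h; rw [myCastEq m hmpos (by omega) (by omega)] at h; omega
    · intro h; rw [myCastEq m hmpos (by omega) (by omega)] at h; omega
    · intro h; rw [myCastEq m hmpos (by omega) (by omega)] at h; omega
    · intro h; rw [myCastEq m hmpos (by omega) (by omega)] at h; omega
  refine ⟨hA, ?_⟩
  intro x
  obtain ⟨v, hvm, rfl⟩ : ∃ v : ℕ, v < m ∧ (v : ZMod m) = x :=
    ⟨x.val, ZMod.val_lt x, by rw [ZMod.natCast_val, ZMod.cast_id]⟩
  have hcases : (a ≤ v ∧ v ≤ a + n - 1) ∨ (v = 0 ∨ (n + 2 ≤ v ∧ v < m)) ∨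
      (2 * v = a ∨ 2 * v = m + a) := by omega
  rcases hcases with h1 | h2 | h3
  · -- v is a "left" point of one of the swaps
    have hmem : Equiv.swap (v : ZMod m) ((m + a - v : ℕ) : ZMod m) ∈
        (List.range' a n).map fun k : ℕ =>
          Equiv.swap (k : ZMod m) ((m + a - k : ℕ) : ZMod m) :=
      List.mem_map.mpr ⟨v, List.mem_range'_1.mpr (by omega), rfl⟩
    have hne : ((m + a - v : ℕ) : ZMod m) ≠ (v : ZMod m) := by
      intro h; rw [myCastEq m hmpos (by omega) (by omega)] at h; omega
    have hσx : Equiv.swap (v : ZMod m) ((m + a - v : ℕ) : ZMod m) (v : ZMod m) ≠ (v : ZMod m) := by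
      rw [Equiv.swap_apply_left]; exact hne
    rw [myProdApply hA hmem hσx, Equiv.swap_apply_left, myCastSub m a v (by omega)]
  · rcases h2 with hv0 | hv2
    · -- v = 0, partner of k = a
      subst hv0
      have hmem : Equiv.swap (a : ZMod m) ((m + a - a : ℕ) : ZMod m) ∈
          (List.range' a n).map fun k : ℕ =>
            Equiv.swap (k : ZMod m) ((m + a - k : ℕ) : ZMod m) :=
        List.mem_map.mpr ⟨a, List.mem_range'_1.mpr (by omega), rfl⟩
      have hx0 : ((0 : ℕ) : ZMod m) = ((m + a - a : ℕ) : ZMod m) := by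
        rw [myCastEq m hmpos (by omega) (by omega)]; omega
      have hσx : Equiv.swap (a : ZMod m) ((m + a - a : ℕ) : ZMod m) ((0 : ℕ) : ZMod m)
          ≠ ((0 : ℕ) : ZMod m) := by
        rw [hx0, Equiv.swap_apply_right]
        intro h; rw [myCastEq m hmpos (by omega) (by omega)] at h; omega
      rw [myProdApply hA hmem hσx, hx0, Equiv.swap_apply_right, myCastSub m a a (by omega)]
      ring
    · -- v is a "right" point: partner of k = m + a - v
      set k : ℕ := m + a - v with hk
      have hkb : a + 1 ≤ k ∧ k ≤ a + n - 1 := by omega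
      have hmem : Equiv.swap (k : ZMod m) ((m + a - k : ℕ) : ZMod m) ∈
          (List.range' a n).map fun l : ℕ =>
            Equiv.swap (l : ZMod m) ((m + a - l : ℕ) : ZMod m) :=
        List.mem_map.mpr ⟨k, List.mem_range'_1.mpr (by omega), rfl⟩
      have hvk : m + a - k = v := by omega
      have hx2 : ((v : ℕ) : ZMod m) = ((m + a - k : ℕ) : ZMod m) := by rw [hvk]
      have hσx : Equiv.swap (k : ZMod m) ((m + a - k : ℕ) : ZMod m) ((v : ℕ) : ZMod m)
          ≠ ((v : ℕ) : ZMod m) := by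
        rw [hx2, Equiv.swap_apply_right]
        intro h; rw [myCastEq m hmpos (by omega) (by omega)] at h; omega
      rw [myProdApply hA hmem hσx, hx2, Equiv.swap_apply_right, myCastSub m a k (by omega)]
      ring
  · -- v is the fixed point
    have hfix : (((List.range' a n).map fun k : ℕ =>
        Equiv.swap (k : ZMod m) ((m + a - k : ℕ) : ZMod m)).prod) (v : ZMod m) = (v : ZMod m) := by
      refine myProdFix _ _ ?_
      intro σ hσ
      obtain ⟨k, hk, rfl⟩ := List.mem_map.mp hσ
      rw [List.mem_range'_1] at hk
      refine Equiv.swap_apply_of_ne_of_ne ?_ ?_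
      · intro h; rw [myCastEq m hmpos (by omega) (by omega)] at h; omega
      · intro h; rw [myCastEq m hmpos (by omega) (by omega)] at h; omega
    rw [hfix]
    have hcast : ((2 * v : ℕ) : ZMod m) = (a : ZMod m) := by
      rcases h3 with h | h
      · rw [h]
      · rw [h, Nat.cast_add, ZMod.natCast_self, zero_add]
    push_cast at hcast
    linear_combination hcast

/-- For odd `m ≥ 3`, the cyclic shift `x ↦ x + 1` on `ZMod m` equals the product
`(∏_{l=2}^{⌈m/2⌉} swap(l, m+2−l)) ∘ (∏_{k=1}^{⌊m/2⌋} swap(k, m+1−k))` (the `k`-product applied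
first), where `⌈m/2⌉ = (m+1)/2`, `⌊m/2⌋ = (m−1)/2`, and within each product the transpositions
are pairwise disjoint. -/
theorem cyclic_shift_eq_two_layers_of_disjoint_transpositions_odd
    (m : ℕ) (hm : 3 ≤ m) (hmodd : Odd m)
    (c : Equiv.Perm (ZMod m)) (hc : ∀ x, c x = x + 1) :
    (((List.range' 2 ((m + 1) / 2 - 1)).map fun l : ℕ =>
        Equiv.swap (l : ZMod m) ((m + 2 - l : ℕ) : ZMod m)).Pairwise Equiv.Perm.Disjoint) ∧
    (((List.range' 1 ((m - 1) / 2)).map fun k : ℕ =>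
        Equiv.swap (k : ZMod m) ((m + 1 - k : ℕ) : ZMod m)).Pairwise Equiv.Perm.Disjoint) ∧
    c = ((List.range' 2 ((m + 1) / 2 - 1)).map fun l : ℕ =>
          Equiv.swap (l : ZMod m) ((m + 2 - l : ℕ) : ZMod m)).prod *
        ((List.range' 1 ((m - 1) / 2)).map fun k : ℕ =>
          Equiv.swap (k : ZMod m) ((m + 1 - k : ℕ) : ZMod m)).prod := by
  obtain ⟨t, ht⟩ := hmodd
  have hn : 1 ≤ t := by omega
  have h1 : (m + 1) / 2 - 1 = t := by omega
  have h2 : (m - 1) / 2 = t := by omega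
  obtain ⟨hA2, hB2⟩ := myMainAux m t 2 (by omega) hn (by omega) (by omega)
  obtain ⟨hA1, hB1⟩ := myMainAux m t 1 (by omega) hn (by omega) (by omega)
  rw [h1, h2]
  refine ⟨hA2, hA1, ?_⟩
  apply Equiv.ext
  intro x
  rw [hc, Equiv.Perm.mul_apply, hB1, hB2]
  push_cast
  ring
end

section
/- Let n ≥ 1 and k ≥ 1 be natural numbers, let ψ ∈ ℂⁿ be a unit vector, and let W be an n×n unitary matrix. For bitstrings b : Fin k → {0,1}, define the family of vectors Φ : (Fin k → {0,1}) → ℂⁿ by Φ(b) = (1/√2)·ψ if b is the all-zeros string, Φ(b) = (1/√2)·(W ψ) if b is the all-ones string, and Φ(b) = 0 otherwise. Then for every bitstring x : Fin k → {0,1}, the quantity Pr(x) := ‖ 2^{−k/2} · Σ_{b : Fin k → {0,1}} (−1)^{Σᵢ xᵢ bᵢ} · Φ(b) ‖² satisfies Pr(x) = (1 + (−1)^{Σᵢ xᵢ} · Re⟨ψ, W ψ⟩) / 2^k. -/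
open scoped InnerProductSpace

/-- Measurement outcome probabilities of the GHZ-controlled cyclic shift test: for every
bitstring `x : Fin k → {0,1}`,
`‖2^{−k/2} · Σ_b (−1)^{Σᵢ xᵢbᵢ} Φ(b)‖² = (1 + (−1)^{Σᵢ xᵢ} Re⟨ψ, Wψ⟩)/2^k`. -/
theorem ghz_cyclic_shift_outcome_probability
    (n k : ℕ) (hn : 1 ≤ n) (hk : 1 ≤ k)
    (ψ : EuclideanSpace ℂ (Fin n)) (hψ : ‖ψ‖ = 1)
    (W : Matrix (Fin n) (Fin n) ℂ) (hW : W ∈ Matrix.unitaryGroup (Fin n) ℂ)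
    (Φ : (Fin k → Fin 2) → EuclideanSpace ℂ (Fin n))
    (hΦ : ∀ b, Φ b =
      if ∀ i, b i = 0 then ((Real.sqrt 2)⁻¹ : ℝ) • ψ
      else if ∀ i, b i = 1 then ((Real.sqrt 2)⁻¹ : ℝ) • (Matrix.toEuclideanLin W ψ)
      else 0) :
    ∀ x : Fin k → Fin 2,
      ‖((2 : ℝ) ^ (-(k : ℝ) / 2)) •
          ∑ b : Fin k → Fin 2, ((-1 : ℝ) ^ (∑ i, (x i : ℕ) * (b i : ℕ))) • Φ b‖ ^ 2 =
        (1 + (-1 : ℝ) ^ (∑ i, (x i : ℕ)) * (⟪ψ, Matrix.toEuclideanLin W ψ⟫_ℂ).re) / 2 ^ k := by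
  intro x
  have i0 : Fin k := ⟨0, hk⟩
  set L : EuclideanSpace ℂ (Fin n) := Matrix.toEuclideanLin W ψ with hL
  set c : ℝ := (-1 : ℝ) ^ (∑ i, (x i : ℕ)) with hc
  set s : ℝ := (Real.sqrt 2)⁻¹ with hs
  set a : ℝ := (2 : ℝ) ^ (-(k : ℝ) / 2) with ha
  set b0 : Fin k → Fin 2 := fun _ => 0 with hb0
  set b1 : Fin k → Fin 2 := fun _ => 1 with hb1
  have hne : b0 ≠ b1 := by
    intro h
    have := congrFun h i0
    simp [hb0, hb1] at this
  -- norm of L is 1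
  have hLnorm : ‖L‖ = 1 := by
    have hadj : Matrix.toEuclideanLin W.conjTranspose = LinearMap.adjoint (Matrix.toEuclideanLin W) :=
      Matrix.toEuclideanLin_conjTranspose_eq_adjoint W
    have hWW : W.conjTranspose * W = 1 := hW.1
    have h1 : (LinearMap.adjoint (Matrix.toEuclideanLin W)) L = ψ := by
      rw [← hadj, hL]
      simp only [Matrix.toEuclideanLin_apply]
      rw [Matrix.mulVec_mulVec, hWW, Matrix.one_mulVec]
    have h2 : ⟪L, L⟫_ℂ = ⟪ψ, ψ⟫_ℂ := by
      calc ⟪L, L⟫_ℂ = ⟪Matrix.toEuclideanLin W ψ, L⟫_ℂ := by rw [hL]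
        _ = ⟪ψ, (LinearMap.adjoint (Matrix.toEuclideanLin W)) L⟫_ℂ := by
            rw [LinearMap.adjoint_inner_right]
        _ = ⟪ψ, ψ⟫_ℂ := by rw [h1]
    have h3 : ‖L‖ ^ 2 = (1 : ℝ) := by
      rw [← @inner_self_eq_norm_sq ℂ, h2, @inner_self_eq_norm_sq ℂ, hψ]; norm_num
    nlinarith [norm_nonneg L]
  -- collapse the sum
  have hsum : (∑ b : Fin k → Fin 2, ((-1 : ℝ) ^ (∑ i, (x i : ℕ) * (b i : ℕ))) • Φ b)
      = s • ψ + c • (s • L) := by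
    have hzero : ∀ b ∈ (Finset.univ : Finset (Fin k → Fin 2)), b ∉ ({b0, b1} : Finset _) →
        ((-1 : ℝ) ^ (∑ i, (x i : ℕ) * (b i : ℕ))) • Φ b = 0 := by
      intro b _ hb
      simp only [Finset.mem_insert, Finset.mem_singleton, not_or] at hb
      have h0 : ¬ ∀ i, b i = 0 := fun h => hb.1 (funext h)
      have h1 : ¬ ∀ i, b i = 1 := fun h => hb.2 (funext h)
      rw [hΦ b, if_neg h0, if_neg h1, smul_zero]
    rw [← Finset.sum_subset (Finset.subset_univ ({b0, b1} : Finset _)) hzero,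
      Finset.sum_pair hne]
    have e0 : (∑ i, (x i : ℕ) * (b0 i : ℕ)) = 0 := by simp [hb0]
    have e1 : (∑ i, (x i : ℕ) * (b1 i : ℕ)) = ∑ i, (x i : ℕ) := by simp [hb1]
    have hΦ0 : Φ b0 = s • ψ := by
      rw [hΦ b0, if_pos (fun i => rfl)]
    have hΦ1 : Φ b1 = s • L := by
      rw [hΦ b1]
      rw [if_neg, if_pos (fun i => rfl)]
      intro h
      exact absurd (h i0) (by simp [hb1])
    rw [e0, e1, hΦ0, hΦ1, pow_zero, one_smul, ← hc]
  rw [hsum]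
  have hrw : a • (s • ψ + c • (s • L)) = (a * s) • (ψ + c • L) := by
    rw [smul_comm c s L, ← smul_add, smul_smul]
  rw [hrw, norm_smul]
  have ha2 : a ^ 2 = ((2 : ℝ) ^ k)⁻¹ := by
    rw [ha, ← Real.rpow_natCast ((2:ℝ) ^ (-(k:ℝ)/2)) 2, ← Real.rpow_mul (by norm_num)]
    rw [show (-(k:ℝ)/2) * (2:ℕ) = -(k:ℝ) by push_cast; ring]
    rw [Real.rpow_neg (by norm_num), Real.rpow_natCast]
  have hs2 : s ^ 2 = 2⁻¹ := by
    rw [hs, inv_pow, Real.sq_sqrt (by norm_num : (0:ℝ) ≤ 2)]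
  have hcabs : |c| = 1 := by
    rw [hc, abs_pow, abs_neg, abs_one, one_pow]
  have hc2 : c ^ 2 = 1 := by
    rw [hc, ← pow_mul, mul_comm, pow_mul, neg_one_sq, one_pow]
  have hnormsum : ‖ψ + c • L‖ ^ 2 = 2 + 2 * c * (⟪ψ, L⟫_ℂ).re := by
    have hcs : c • L = ((c : ℂ)) • L := by
      rw [← Complex.coe_smul]
    rw [@norm_add_sq ℂ, hcs, inner_smul_right, norm_smul, hψ, hLnorm,
      Complex.norm_real, Real.norm_eq_abs, hcabs]
    simp only [RCLike.re_to_complex, Complex.mul_re, Complex.ofReal_re, Complex.ofReal_im,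
      zero_mul, sub_zero]
    ring
  have has : |a * s| = a * s := by
    apply abs_of_nonneg
    positivity
  rw [Real.norm_eq_abs, has, mul_pow, mul_pow, ha2, hs2, hnormsum]
  have h2k : (0:ℝ) < 2 ^ k := by positivity
  field_simp
end

section
/- Let n ≥ 1 and k ≥ 1 be natural numbers, let ψ ∈ ℂⁿ be a unit vector, and let W be an n×n unitary matrix. For bitstrings b : Fin k → {0,1}, define Φ : (Fin k → {0,1}) → ℂⁿ by Φ(b) = (1/√2)·ψ if b is the all-zeros string, Φ(b) = (1/√2)·(W ψ) if b is the all-ones string, and Φ(b) = 0 otherwise; and for each bitstring x : Fin k → {0,1} define Pr(x) := ‖ 2^{−k/2} · Σ_{b} (−1)^{Σᵢ xᵢ bᵢ} · Φ(b) ‖². Then Σ_{x : Fin k → {0,1}} (−1)^{Σᵢ xᵢ} · Pr(x) = Re⟨ψ, W ψ⟩. -/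
open scoped InnerProductSpace

/-- The expectation of the parity estimator `(−1)^{Σᵢ xᵢ}` under the outcome distribution
`Pr(x) = ‖2^{−k/2} · Σ_b (−1)^{Σᵢ xᵢbᵢ} Φ(b)‖²` equals `Re⟨ψ, W ψ⟩`. -/
theorem ghz_cyclic_shift_expectation
    (n k : ℕ) (hn : 1 ≤ n) (hk : 1 ≤ k)
    (ψ : EuclideanSpace ℂ (Fin n)) (hψ : ‖ψ‖ = 1)
    (W : Matrix (Fin n) (Fin n) ℂ) (hW : W ∈ Matrix.unitaryGroup (Fin n) ℂ)
    (Φ : (Fin k → Fin 2) → EuclideanSpace ℂ (Fin n))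
    (hΦ : ∀ b, Φ b =
      if ∀ i, b i = 0 then ((Real.sqrt 2)⁻¹ : ℝ) • ψ
      else if ∀ i, b i = 1 then ((Real.sqrt 2)⁻¹ : ℝ) • (Matrix.toEuclideanLin W ψ)
      else 0) :
    ∑ x : Fin k → Fin 2, ((-1 : ℝ) ^ (∑ i, (x i : ℕ))) *
        ‖((2 : ℝ) ^ (-(k : ℝ) / 2)) •
          ∑ b : Fin k → Fin 2, ((-1 : ℝ) ^ (∑ i, (x i : ℕ) * (b i : ℕ))) • Φ b‖ ^ 2 =
      (⟪ψ, Matrix.toEuclideanLin W ψ⟫_ℂ).re := by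
  classical
  set Wl := Matrix.toEuclideanLin W with hWl
  set R : ℝ := (⟪ψ, Wl ψ⟫_ℂ).re with hR
  -- norm preservation
  have hcomp : ∀ (A B : Matrix (Fin n) (Fin n) ℂ) (v : EuclideanSpace ℂ (Fin n)),
      Matrix.toEuclideanLin A (Matrix.toEuclideanLin B v) = Matrix.toEuclideanLin (A * B) v := by
    intro A B v
    simp [Matrix.toEuclideanLin_apply, Matrix.mulVec_mulVec]
  have hWψ : ‖Wl ψ‖ = 1 := by
    have hadj : (LinearMap.adjoint Wl) (Wl ψ) = ψ := by
      rw [hWl, ← Matrix.toEuclideanLin_conjTranspose_eq_adjoint, hcomp]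
      have h1 : W.conjTranspose * W = 1 := hW.1
      rw [h1]
      simp [Matrix.toEuclideanLin_apply]
    have hinner : ⟪Wl ψ, Wl ψ⟫_ℂ = ⟪ψ, ψ⟫_ℂ := by
      rw [← LinearMap.adjoint_inner_left, hadj]
    have h2 : ‖Wl ψ‖ ^ 2 = ‖ψ‖ ^ 2 := by
      rw [← @inner_self_eq_norm_sq ℂ, ← @inner_self_eq_norm_sq ℂ, hinner]
    have := congrArg Real.sqrt h2
    rwa [Real.sqrt_sq (norm_nonneg _), Real.sqrt_sq (norm_nonneg _), hψ] at this
  -- the special bitstrings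
  set b0 : Fin k → Fin 2 := fun _ => 0 with hb0
  set b1 : Fin k → Fin 2 := fun _ => 1 with hb1
  have i0 : Fin k := ⟨0, hk⟩
  have hne : b0 ≠ b1 := by
    intro h
    have := congrFun h i0
    simp [hb0, hb1] at this
  -- the inner sum
  have hsum : ∀ x : Fin k → Fin 2,
      (∑ b : Fin k → Fin 2, ((-1 : ℝ) ^ (∑ i, (x i : ℕ) * (b i : ℕ))) • Φ b)
        = ((Real.sqrt 2)⁻¹ : ℝ) • (ψ + ((-1 : ℝ) ^ (∑ i, (x i : ℕ))) • Wl ψ) := by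
    intro x
    have hzero : ∀ b ∈ (Finset.univ : Finset (Fin k → Fin 2)), b ∉ ({b0, b1} : Finset _) →
        ((-1 : ℝ) ^ (∑ i, (x i : ℕ) * (b i : ℕ))) • Φ b = 0 := by
      intro b _ hb
      simp only [Finset.mem_insert, Finset.mem_singleton, not_or] at hb
      rw [hΦ b, if_neg, if_neg, smul_zero]
      · intro h; exact hb.2 (funext fun i => by simpa [hb1] using h i)
      · intro h; exact hb.1 (funext fun i => by simpa [hb0] using h i)
    rw [← Finset.sum_subset (Finset.subset_univ ({b0, b1} : Finset _)) hzero,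
      Finset.sum_pair hne]
    have hΦ0 : Φ b0 = ((Real.sqrt 2)⁻¹ : ℝ) • ψ := by
      rw [hΦ b0, if_pos fun i => rfl]
    have hΦ1 : Φ b1 = ((Real.sqrt 2)⁻¹ : ℝ) • Wl ψ := by
      rw [hΦ b1, if_neg, if_pos fun i => rfl]
      intro h
      have := h i0
      simp [hb1] at this
    have he0 : (∑ i, (x i : ℕ) * ((b0 i : ℕ))) = 0 := by simp [hb0]
    have he1 : (∑ i, (x i : ℕ) * ((b1 i : ℕ))) = ∑ i, (x i : ℕ) := by simp [hb1]
    rw [hΦ0, hΦ1, he0, he1]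
    rw [smul_add, pow_zero, one_smul, smul_comm]
  have hk2 : ((2 : ℝ) ^ (-(k : ℝ) / 2)) ^ 2 = ((2 : ℝ) ^ k)⁻¹ := by
    rw [← Real.rpow_natCast ((2 : ℝ) ^ (-(k : ℝ) / 2)) 2, ← Real.rpow_mul (by norm_num)]
    norm_num
  have hr2 : ((Real.sqrt 2)⁻¹ : ℝ) ^ 2 = 2⁻¹ := by
    rw [inv_pow, Real.sq_sqrt (by norm_num : (0:ℝ) ≤ 2)]
  -- pointwise probability
  have hPr : ∀ x : Fin k → Fin 2,
      ‖((2 : ℝ) ^ (-(k : ℝ) / 2)) •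
          ∑ b : Fin k → Fin 2, ((-1 : ℝ) ^ (∑ i, (x i : ℕ) * (b i : ℕ))) • Φ b‖ ^ 2
        = ((2 : ℝ) ^ k)⁻¹ * (1 + ((-1 : ℝ) ^ (∑ i, (x i : ℕ))) * R) := by
    intro x
    rw [hsum x]
    set s : ℝ := ((-1 : ℝ) ^ (∑ i, (x i : ℕ))) with hs
    have hs2 : s ^ 2 = 1 := by
      rw [hs, ← pow_mul, mul_comm, pow_mul]
      norm_num
    have hv : ‖ψ + s • Wl ψ‖ ^ 2 = 2 + 2 * s * R := by
      rw [norm_add_sq (𝕜 := ℂ)]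
      have h1 : ⟪ψ, s • Wl ψ⟫_ℂ = (s : ℂ) * ⟪ψ, Wl ψ⟫_ℂ := by
        rw [RCLike.real_smul_eq_coe_smul (K := ℂ), inner_smul_right]
        norm_cast
      have h2 : ‖s • Wl ψ‖ ^ 2 = 1 := by
        rw [norm_smul, mul_pow, hWψ]
        simpa using hs2
      rw [h1, h2, hψ]
      simp [hR]
      ring
    rw [norm_smul, norm_smul, mul_pow, mul_pow, hv]
    have hc : |(2 : ℝ) ^ (-(k : ℝ) / 2)| = (2 : ℝ) ^ (-(k : ℝ) / 2) :=
      abs_of_pos (Real.rpow_pos_of_pos (by norm_num) _)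
    have hd : ‖((Real.sqrt 2)⁻¹ : ℝ)‖ = (Real.sqrt 2)⁻¹ :=
      Real.norm_of_nonneg (by positivity)
    rw [Real.norm_eq_abs, hc, hd, hk2, hr2]
    ring
  simp only [hPr]
  -- sum of signs is zero
  have hsign : (∑ x : Fin k → Fin 2, ((-1 : ℝ) ^ (∑ i, (x i : ℕ)))) = 0 := by
    have : ∀ x : Fin k → Fin 2, ((-1 : ℝ) ^ (∑ i, (x i : ℕ)))
        = ∏ i, ((-1 : ℝ) ^ (x i : ℕ)) := fun x =>
      (Finset.prod_pow_eq_pow_sum Finset.univ _ _).symm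
    simp only [this]
    rw [← Fintype.prod_sum (fun (_ : Fin k) (j : Fin 2) => ((-1 : ℝ) ^ (j : ℕ)))]
    have : (∑ j : Fin 2, ((-1 : ℝ) ^ (j : ℕ))) = 0 := by simp [Fin.sum_univ_succ]
    rw [this]
    rw [Finset.prod_const, zero_pow]
    simp
    omega
  have hsq : ∀ x : Fin k → Fin 2, ((-1 : ℝ) ^ (∑ i, (x i : ℕ))) ^ 2 = 1 := by
    intro x
    rw [← pow_mul, mul_comm, pow_mul]; norm_num
  have hcard : (Fintype.card (Fin k → Fin 2) : ℝ) = 2 ^ k := by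
    simp [Fintype.card_fun]
  calc ∑ x : Fin k → Fin 2, ((-1 : ℝ) ^ (∑ i, (x i : ℕ))) *
        (((2 : ℝ) ^ k)⁻¹ * (1 + ((-1 : ℝ) ^ (∑ i, (x i : ℕ))) * R))
      = ((2 : ℝ) ^ k)⁻¹ * ∑ x : Fin k → Fin 2,
          (((-1 : ℝ) ^ (∑ i, (x i : ℕ))) + ((-1 : ℝ) ^ (∑ i, (x i : ℕ))) ^ 2 * R) := by
        rw [Finset.mul_sum]; congr 1; funext x; ring
    _ = ((2 : ℝ) ^ k)⁻¹ * (0 + (2 : ℝ) ^ k * R) := by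
        rw [Finset.sum_add_distrib, hsign]
        congr 1
        simp only [hsq, one_mul]
        rw [Finset.sum_const, nsmul_eq_mul, Finset.card_univ, hcard]
    _ = R := by
        field_simp
        ring
end

section
/- Let α > 0 be a real number and define the generalized binomial coefficient binom(α, k) := (∏_{i=0}^{k−1} (α − i)) / k! for natural numbers k. Then the series Σ_{k=0}^∞ |binom(α, k)| converges; that is, the function k ↦ |binom(α, k)| is summable. -/
/-- For `α > 0`, the series of absolute values of the generalized binomial coefficients
`binom(α, k) = (∏_{i=0}^{k−1} (α − i)) / k!` is summable. -/
theorem summable_abs_generalized_binomial (α : ℝ) (hα : 0 < α) :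
    Summable (fun k : ℕ => |(∏ i ∈ Finset.range k, (α - i)) / (k.factorial : ℝ)|) := by
  set a : ℕ → ℝ := fun k => |(∏ i ∈ Finset.range k, (α - i)) / (k.factorial : ℝ)| with ha
  have hanonneg : ∀ k, 0 ≤ a k := fun k => abs_nonneg _
  have key : ∀ k : ℕ, α ≤ k → a (k + 1) = (((k : ℝ) - α) / (k + 1)) * a k := by
    intro k hk
    have hk1 : ((k : ℝ) + 1) ≠ 0 := by positivity
    have h1 : (∏ i ∈ Finset.range (k + 1), (α - i)) / ((k + 1).factorial : ℝ)
        = ((α - k) / (k + 1)) * ((∏ i ∈ Finset.range k, (α - i)) / (k.factorial : ℝ)) := by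
      rw [Finset.prod_range_succ, Nat.factorial_succ]
      push_cast
      field_simp
    have h2 : a (k + 1) = |(α - k) / ((k : ℝ) + 1)| * a k := by
      simp only [ha]; rw [h1, abs_mul]
    rw [h2, abs_div, abs_of_nonpos (by linarith : α - (k : ℝ) ≤ 0),
        abs_of_nonneg (by positivity : (0:ℝ) ≤ (k : ℝ) + 1)]
    ring_nf
  set b : ℕ → ℝ := fun k => k * a k with hb
  have hbnonneg : ∀ k, 0 ≤ b k := fun k => by
    have := hanonneg k; positivity
  have tele : ∀ k : ℕ, α ≤ k → α * a k = b k - b (k + 1) := by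
    intro k hk
    have h := key k hk
    simp only [hb]
    rw [h]
    have hk1 : ((k : ℝ) + 1) ≠ 0 := by positivity
    push_cast
    field_simp
    ring
  set N := ⌈α⌉₊ with hN
  have hαN : α ≤ N := Nat.le_ceil α
  have hNk : ∀ n : ℕ, α ≤ (N + n : ℕ) := by
    intro n
    calc α ≤ (N : ℝ) := hαN
    _ ≤ ((N + n : ℕ) : ℝ) := by push_cast; linarith [Nat.cast_nonneg (α := ℝ) n]
  have hpartial : ∀ n : ℕ, α * ∑ i ∈ Finset.range n, a (N + i) = b N - b (N + n) := by
    intro n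
    induction n with
    | zero => simp
    | succ n ih =>
      rw [Finset.sum_range_succ, mul_add, ih, tele (N + n) (hNk n)]
      have : N + (n + 1) = (N + n) + 1 := by omega
      rw [this]
      ring
  have hbound : ∀ n : ℕ, ∑ i ∈ Finset.range n, a (i + N) ≤ b N / α := by
    intro n
    have h1 : ∑ i ∈ Finset.range n, a (i + N) = ∑ i ∈ Finset.range n, a (N + i) := by
      refine Finset.sum_congr rfl fun i _ => by rw [Nat.add_comm]
    rw [h1, le_div_iff₀ hα, mul_comm]
    have := hpartial n
    have := hbnonneg (N + n)
    linarith
  have htail : Summable (fun k => a (k + N)) :=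
    summable_of_sum_range_le (fun k => hanonneg _) hbound
  exact (summable_nat_add_iff N).mp htail
end

section
/- Let ρ and σ be d×d density matrices (positive semidefinite complex matrices with trace 1) and let α ∈ (0,1) be a real number. Then the trace Tr[ρ^α σ^{1−α}] is a real number lying in the interval [0, 1]. Here, for a positive semidefinite matrix A and real β > 0, A^β denotes the real power of A defined by the continuous functional calculus (with 0^β = 0 on the kernel). -/
open scoped ComplexOrder

lemma trace_conj_diag_mul_conj_diag {d : ℕ} (U V : Matrix (Fin d) (Fin d) ℂ)
    (a b : Fin d → ℝ) :
    Matrix.trace ((U * Matrix.diagonal (fun i => (a i : ℂ)) * star U) *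
        (V * Matrix.diagonal (fun j => (b j : ℂ)) * star V))
      = ((∑ i, ∑ j, a i * b j * Complex.normSq ((star U * V) i j) : ℝ) : ℂ) := by
  set W : Matrix (Fin d) (Fin d) ℂ := star U * V with hW
  set D := Matrix.diagonal (fun i => (a i : ℂ))
  set E := Matrix.diagonal (fun j => (b j : ℂ))
  have h1 : (U * D * star U) * (V * E * star V) = U * (D * W * E) * star V := by
    simp [hW, mul_assoc]
  rw [h1, Matrix.trace_mul_cycle]
  have h2 : star V * U = star W := by simp [hW]
  rw [h2]
  simp only [D, E, Matrix.trace, Matrix.diag_apply, Matrix.mul_apply, Matrix.diagonal_apply,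
    Matrix.star_apply, ite_mul, mul_ite, zero_mul, mul_zero, Finset.sum_ite_eq,
    Finset.sum_ite_eq', Finset.mem_univ, if_true, Finset.mul_sum, Finset.sum_mul]
  push_cast
  rw [Finset.sum_comm]
  refine Finset.sum_congr rfl fun i _ => ?_
  refine Finset.sum_congr rfl fun j _ => ?_
  rw [Complex.normSq_eq_conj_mul_self, Complex.star_def]
  ring

/-- For density matrices `ρ, σ` and `α ∈ (0,1)`, the quantity `Tr[ρ^α σ^{1−α}]` (with matrix
real powers given by the continuous functional calculus) is a real number in `[0, 1]`. -/
theorem trace_rpow_mul_rpow_mem_unit_interval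
    {d : ℕ} (ρ σ : Matrix (Fin d) (Fin d) ℂ)
    (hρ : ρ.PosSemidef) (hρtr : ρ.trace = 1)
    (hσ : σ.PosSemidef) (hσtr : σ.trace = 1)
    (α : ℝ) (hα : α ∈ Set.Ioo (0 : ℝ) 1) :
    (Matrix.trace (cfc (fun x : ℝ => x ^ α) ρ * cfc (fun x : ℝ => x ^ (1 - α)) σ)).im = 0 ∧
    (Matrix.trace (cfc (fun x : ℝ => x ^ α) ρ * cfc (fun x : ℝ => x ^ (1 - α)) σ)).re ∈
      Set.Icc (0 : ℝ) 1 := by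
  obtain ⟨hα0, hα1⟩ := hα
  have hρh : ρ.IsHermitian := hρ.1
  have hσh : σ.IsHermitian := hσ.1
  set a : Fin d → ℝ := hρh.eigenvalues with ha_def
  set b : Fin d → ℝ := hσh.eigenvalues with hb_def
  have ha : ∀ i, 0 ≤ a i := hρ.eigenvalues_nonneg
  have hb : ∀ i, 0 ≤ b i := hσ.eigenvalues_nonneg
  set U : Matrix (Fin d) (Fin d) ℂ := (hρh.eigenvectorUnitary : Matrix (Fin d) (Fin d) ℂ) with hU_def
  set V : Matrix (Fin d) (Fin d) ℂ := (hσh.eigenvectorUnitary : Matrix (Fin d) (Fin d) ℂ) with hV_def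
  have hUU : star U * U = 1 := Unitary.star_mul_self_of_mem (hρh.eigenvectorUnitary).2
  have hUU' : U * star U = 1 := Unitary.mul_star_self_of_mem (hρh.eigenvectorUnitary).2
  have hVV : star V * V = 1 := Unitary.star_mul_self_of_mem (hσh.eigenvectorUnitary).2
  have hVV' : V * star V = 1 := Unitary.mul_star_self_of_mem (hσh.eigenvectorUnitary).2
  set W : Matrix (Fin d) (Fin d) ℂ := star U * V with hW_def
  set c : Fin d → Fin d → ℝ := fun i j => Complex.normSq (W i j) with hc_def
  have hc : ∀ i j, 0 ≤ c i j := fun i j => Complex.normSq_nonneg _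
  -- rewriting cfc into conjugated diagonals
  have e1 : cfc (fun x : ℝ => x ^ α) ρ
      = U * Matrix.diagonal (fun i => ((a i ^ α : ℝ) : ℂ)) * star U := by
    rw [hρh.cfc_eq]; rfl
  have e2 : cfc (fun x : ℝ => x ^ (1 - α)) σ
      = V * Matrix.diagonal (fun j => ((b j ^ (1 - α) : ℝ) : ℂ)) * star V := by
    rw [hσh.cfc_eq]; rfl
  have hTr : Matrix.trace (cfc (fun x : ℝ => x ^ α) ρ * cfc (fun x : ℝ => x ^ (1 - α)) σ)
      = ((∑ i, ∑ j, a i ^ α * b j ^ (1 - α) * c i j : ℝ) : ℂ) := by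
    rw [e1, e2, trace_conj_diag_mul_conj_diag]
  -- row and column sums of c are 1
  have hWW' : W * star W = 1 := by
    rw [hW_def, StarMul.star_mul, star_star, mul_assoc, ← mul_assoc V, hVV', one_mul, hUU]
  have hW'W : star W * W = 1 := by
    rw [hW_def, StarMul.star_mul, star_star, mul_assoc, ← mul_assoc U, hUU', one_mul, hVV]
  have hrow : ∀ i, ∑ j, c i j = 1 := by
    intro i
    have := congrFun (congrFun hWW' i) i
    simp only [Matrix.mul_apply, Matrix.one_apply_eq, Matrix.star_apply] at this
    have h2 : ((∑ j, c i j : ℝ) : ℂ) = 1 := by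
      push_cast
      rw [← this]
      refine Finset.sum_congr rfl fun j _ => ?_
      rw [hc_def]
      rw [Complex.normSq_eq_conj_mul_self, Complex.star_def]
      ring
    exact_mod_cast h2
  have hcol : ∀ j, ∑ i, c i j = 1 := by
    intro j
    have := congrFun (congrFun hW'W j) j
    simp only [Matrix.mul_apply, Matrix.one_apply_eq, Matrix.star_apply] at this
    have h2 : ((∑ i, c i j : ℝ) : ℂ) = 1 := by
      push_cast
      rw [← this]
      refine Finset.sum_congr rfl fun i _ => ?_
      rw [hc_def]
      rw [Complex.normSq_eq_conj_mul_self, Complex.star_def]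
    exact_mod_cast h2
  -- eigenvalue sums are 1
  have hsuma : ∑ i, a i = 1 := by
    have h1 : ρ.trace = ((∑ i, a i : ℝ) : ℂ) := by
      conv_lhs => rw [hρh.spectral_theorem]
      rw [Unitary.conjStarAlgAut_apply, Matrix.trace_mul_cycle, hUU, one_mul, Matrix.trace_diagonal]
      push_cast
      rfl
    rw [hρtr] at h1
    exact_mod_cast h1.symm
  have hsumb : ∑ j, b j = 1 := by
    have h1 : σ.trace = ((∑ j, b j : ℝ) : ℂ) := by
      conv_lhs => rw [hσh.spectral_theorem]
      rw [Unitary.conjStarAlgAut_apply, Matrix.trace_mul_cycle, hVV, one_mul, Matrix.trace_diagonal]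
      push_cast
      rfl
    rw [hσtr] at h1
    exact_mod_cast h1.symm
  rw [hTr]
  refine ⟨by simp, ?_, ?_⟩
  · simp only [Complex.ofReal_re]
    refine Finset.sum_nonneg fun i _ => Finset.sum_nonneg fun j _ => ?_
    exact mul_nonneg (mul_nonneg (Real.rpow_nonneg (ha i) α)
      (Real.rpow_nonneg (hb j) (1 - α))) (hc i j)
  · simp only [Complex.ofReal_re]
    calc ∑ i, ∑ j, a i ^ α * b j ^ (1 - α) * c i j
        ≤ ∑ i, ∑ j, (α * a i + (1 - α) * b j) * c i j := by
          refine Finset.sum_le_sum fun i _ => Finset.sum_le_sum fun j _ => ?_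
          refine mul_le_mul_of_nonneg_right ?_ (hc i j)
          exact Real.geom_mean_le_arith_mean2_weighted hα0.le (by linarith) (ha i) (hb j)
            (by ring)
      _ = α * ∑ i, a i + (1 - α) * ∑ j, b j := by
          simp only [add_mul, Finset.sum_add_distrib]
          congr 1
          · rw [Finset.mul_sum]
            refine Finset.sum_congr rfl fun i _ => ?_
            rw [← Finset.mul_sum, hrow i, mul_one]
          · rw [Finset.sum_comm, Finset.mul_sum]
            refine Finset.sum_congr rfl fun j _ => ?_
            rw [← Finset.mul_sum, hcol j, mul_one]
      _ = 1 := by rw [hsuma, hsumb]; ring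
end

section
/- Let d ≥ 1 be a natural number, let ρ and σ be d×d density matrices (positive semidefinite complex matrices with trace 1), and let α ∈ (0,1) be a real number. Then Tr[(I + ρ)^α · (I + σ)^{1−α}] = d + 1 if and only if ρ = σ, where I is the d×d identity matrix and, for a positive definite matrix A and real β, A^β denotes the real power of A defined by the continuous functional calculus. -/
open scoped ComplexOrder

open Matrix in
private lemma young_le {x y a : ℝ} (hx : 0 < x) (hy : 0 < y) (ha : 0 < a) (ha1 : a < 1) :
    x ^ a * y ^ (1 - a) ≤ a * x + (1 - a) * y := by
  have hs : -1 ≤ x / y - 1 := by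
    have : 0 < x / y := div_pos hx hy
    linarith
  have h := rpow_one_add_le_one_add_mul_self hs ha.le ha1.le
  rw [add_sub_cancel] at h
  have h2 : (x / y) ^ a * y ≤ (1 + a * (x / y - 1)) * y :=
    mul_le_mul_of_nonneg_right h hy.le
  calc x ^ a * y ^ (1 - a) = (x / y) ^ a * y := by
        rw [Real.div_rpow hx.le hy.le, Real.rpow_sub hy, Real.rpow_one]
        field_simp
    _ ≤ (1 + a * (x / y - 1)) * y := h2
    _ = a * x + (1 - a) * y := by field_simp; ring

private lemma young_eq_iff {x y a : ℝ} (hx : 0 < x) (hy : 0 < y) (ha : 0 < a) (ha1 : a < 1) :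
    x ^ a * y ^ (1 - a) = a * x + (1 - a) * y ↔ x = y := by
  constructor
  · intro h
    by_contra hne
    have hs : -1 ≤ x / y - 1 := by
      have : 0 < x / y := div_pos hx hy
      linarith
    have hs' : x / y - 1 ≠ 0 := by
      intro h0
      apply hne
      field_simp at h0
      linarith
    have hlt := rpow_one_add_lt_one_add_mul_self hs hs' ha ha1
    rw [add_sub_cancel] at hlt
    have h2 : (x / y) ^ a * y < (1 + a * (x / y - 1)) * y :=
      mul_lt_mul_of_pos_right hlt hy
    have h3 : x ^ a * y ^ (1 - a) < a * x + (1 - a) * y := by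
      calc x ^ a * y ^ (1 - a) = (x / y) ^ a * y := by
            rw [Real.div_rpow hx.le hy.le, Real.rpow_sub hy, Real.rpow_one]
            field_simp
        _ < (1 + a * (x / y - 1)) * y := h2
        _ = a * x + (1 - a) * y := by field_simp; ring
    exact absurd h h3.ne
  · rintro rfl
    rw [← Real.rpow_add hx, add_sub_cancel, Real.rpow_one]
    ring

private lemma diag_entry {d : ℕ} (f g : Fin d → ℂ) (P : Matrix (Fin d) (Fin d) ℂ) (i : Fin d) :
    (Matrix.diagonal f * P * Matrix.diagonal g * star P) i i
      = ∑ j, f i * P i j * g j * (starRingEnd ℂ) (P i j) := by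
  have h1 : ∀ x, (Matrix.diagonal f * P * Matrix.diagonal g) i x = f i * P i x * g x := by
    intro x
    rw [Matrix.mul_diagonal, Matrix.diagonal_mul]
  rw [Matrix.mul_apply]
  refine Finset.sum_congr rfl fun j _ => ?_
  rw [h1, Matrix.star_apply, Complex.star_def]

/-- Faithfulness: for density matrices `ρ, σ` and `α ∈ (0,1)`,
`Tr[(I+ρ)^α (I+σ)^{1−α}] = d + 1` if and only if `ρ = σ`. -/
theorem trace_K_alpha_eq_iff
    {d : ℕ} (hd : 1 ≤ d) (ρ σ : Matrix (Fin d) (Fin d) ℂ)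
    (hρ : ρ.PosSemidef) (hρtr : ρ.trace = 1)
    (hσ : σ.PosSemidef) (hσtr : σ.trace = 1)
    (α : ℝ) (hα : α ∈ Set.Ioo (0 : ℝ) 1) :
    Matrix.trace (cfc (fun x : ℝ => x ^ α) (1 + ρ) *
        cfc (fun x : ℝ => x ^ (1 - α)) (1 + σ)) = (d : ℂ) + 1 ↔ ρ = σ := by
  obtain ⟨hα0, hα1⟩ := hα
  have hApd : (1 + ρ).PosDef := Matrix.PosDef.one.add_posSemidef hρ
  have hBpd : (1 + σ).PosDef := Matrix.PosDef.one.add_posSemidef hσ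
  set A : Matrix (Fin d) (Fin d) ℂ := 1 + ρ with hAdef
  set B : Matrix (Fin d) (Fin d) ℂ := 1 + σ with hBdef
  have hAh : A.IsHermitian := hApd.isHermitian
  have hBh : B.IsHermitian := hBpd.isHermitian
  set a : Fin d → ℝ := hAh.eigenvalues with hadef
  set b : Fin d → ℝ := hBh.eigenvalues with hbdef
  have ha : ∀ i, 0 < a i := hApd.eigenvalues_pos
  have hb : ∀ j, 0 < b j := hBpd.eigenvalues_pos
  set U : Matrix (Fin d) (Fin d) ℂ := (hAh.eigenvectorUnitary : Matrix (Fin d) (Fin d) ℂ) with hUdef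
  set V : Matrix (Fin d) (Fin d) ℂ := (hBh.eigenvectorUnitary : Matrix (Fin d) (Fin d) ℂ) with hVdef
  have hU1 : U * star U = 1 := Matrix.mem_unitaryGroup_iff.mp hAh.eigenvectorUnitary.2
  have hU2 : star U * U = 1 := Matrix.mem_unitaryGroup_iff'.mp hAh.eigenvectorUnitary.2
  have hV1 : V * star V = 1 := Matrix.mem_unitaryGroup_iff.mp hBh.eigenvectorUnitary.2
  have hV2 : star V * V = 1 := Matrix.mem_unitaryGroup_iff'.mp hBh.eigenvectorUnitary.2
  set P : Matrix (Fin d) (Fin d) ℂ := star U * V with hPdef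
  have hP1 : P * star P = 1 := by
    rw [hPdef, star_mul, star_star, Matrix.mul_assoc, ← Matrix.mul_assoc V, hV1,
      Matrix.one_mul, hU2]
  have hP2 : star P * P = 1 := by
    rw [hPdef, star_mul, star_star, Matrix.mul_assoc, ← Matrix.mul_assoc U, hU1,
      Matrix.one_mul, hV2]
  set nsq : Fin d → Fin d → ℝ := fun i j => Complex.normSq (P i j) with hnsqdef
  have hnsq : ∀ i j, 0 ≤ nsq i j := fun i j => Complex.normSq_nonneg _
  -- diagonal matrices
  set Da : Matrix (Fin d) (Fin d) ℂ :=
    Matrix.diagonal (fun i => ((a i : ℂ))) with hDadef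
  set Db : Matrix (Fin d) (Fin d) ℂ :=
    Matrix.diagonal (fun j => ((b j : ℂ))) with hDbdef
  have hAspec : A = U * Da * star U := hAh.spectral_theorem
  have hBspec : B = V * Db * star V := hBh.spectral_theorem
  -- row and column sums of nsq
  have hrow : ∀ i, ∑ j, nsq i j = 1 := by
    intro i
    have := congrFun (congrFun hP1 i) i
    simp only [Matrix.mul_apply, Matrix.one_apply_eq, Matrix.conjTranspose_apply] at this
    have : ((∑ j, nsq i j : ℝ) : ℂ) = 1 := by
      rw [Complex.ofReal_sum]
      rw [← this]
      refine Finset.sum_congr rfl fun j _ => ?_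
      simp only [hnsqdef]
      rw [Matrix.star_apply, Complex.star_def, Complex.mul_conj]
    exact_mod_cast this
  have hcol : ∀ j, ∑ i, nsq i j = 1 := by
    intro j
    have := congrFun (congrFun hP2 j) j
    simp only [Matrix.mul_apply, Matrix.one_apply_eq, Matrix.conjTranspose_apply] at this
    have : ((∑ i, nsq i j : ℝ) : ℂ) = 1 := by
      rw [Complex.ofReal_sum, ← this]
      refine Finset.sum_congr rfl fun i _ => ?_
      simp only [hnsqdef]
      rw [Matrix.star_apply, Complex.star_def, Complex.normSq_eq_conj_mul_self]
    exact_mod_cast this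
  -- eigenvalue sums
  have htrA : A.trace = (d : ℂ) + 1 := by
    rw [hAdef, Matrix.trace_add, Matrix.trace_one, hρtr]
    simp
  have htrB : B.trace = (d : ℂ) + 1 := by
    rw [hBdef, Matrix.trace_add, Matrix.trace_one, hσtr]
    simp
  have hsuma : ∑ i, a i = (d : ℝ) + 1 := by
    have h1 : A.trace = ∑ i, ((a i : ℂ)) := by
      rw [hAspec, Matrix.trace_mul_cycle, hU2, Matrix.one_mul,
        Matrix.trace_diagonal]
    rw [htrA] at h1
    have : ((∑ i, a i : ℝ) : ℂ) = ((d : ℝ) + 1 : ℝ) := by push_cast; rw [← h1]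
    exact_mod_cast this
  have hsumb : ∑ j, b j = (d : ℝ) + 1 := by
    have h1 : B.trace = ∑ j, ((b j : ℂ)) := by
      rw [hBspec, Matrix.trace_mul_cycle, hV2, Matrix.one_mul,
        Matrix.trace_diagonal]
    rw [htrB] at h1
    have : ((∑ j, b j : ℝ) : ℂ) = ((d : ℝ) + 1 : ℝ) := by push_cast; rw [← h1]
    exact_mod_cast this
  -- the trace as a real sum
  set S : ℝ := ∑ i, ∑ j, (a i ^ α * b j ^ (1 - α)) * nsq i j with hSdef
  have hcfcA : cfc (fun x : ℝ => x ^ α) A =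
      U * Matrix.diagonal (fun i => ((a i ^ α : ℝ) : ℂ)) * star U := by
    rw [hAh.cfc_eq]
    rfl
  have hcfcB : cfc (fun x : ℝ => x ^ (1 - α)) B =
      V * Matrix.diagonal (fun j => ((b j ^ (1 - α) : ℝ) : ℂ)) * star V := by
    rw [hBh.cfc_eq]
    rfl
  have htr : Matrix.trace (cfc (fun x : ℝ => x ^ α) A *
      cfc (fun x : ℝ => x ^ (1 - α)) B) = (S : ℂ) := by
    rw [hcfcA, hcfcB]
    set Fa : Fin d → ℂ := fun i => ((a i ^ α : ℝ) : ℂ) with hFadef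
    set Fb : Fin d → ℂ := fun j => ((b j ^ (1 - α) : ℝ) : ℂ) with hFbdef
    have key : U * Matrix.diagonal Fa * star U * (V * Matrix.diagonal Fb * star V)
        = U * (Matrix.diagonal Fa * P * Matrix.diagonal Fb * star P) * star U := by
      rw [hPdef, star_mul, star_star]
      simp only [Matrix.mul_assoc]
      rw [hU1, Matrix.mul_one]
    rw [key, Matrix.trace_mul_cycle, hU2, Matrix.one_mul]
    rw [Matrix.trace]
    rw [hSdef, Complex.ofReal_sum]
    refine Finset.sum_congr rfl fun i _ => ?_
    rw [Matrix.diag_apply, Complex.ofReal_sum, diag_entry]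
    refine Finset.sum_congr rfl fun j _ => ?_
    rw [hnsqdef, hFadef, hFbdef]
    push_cast
    rw [← Complex.mul_conj]
    ring
  rw [htr]
  -- condition C
  have hC_of_eq : ρ = σ → ∀ i j, P i j = 0 ∨ a i = b j := by
    intro h i j
    have hAB : A = B := by rw [hAdef, hBdef, h]
    have hcomm : Da * P = P * Db := by
      have h1 : U * Da * star U = V * Db * star V := by rw [← hAspec, ← hBspec, hAB]
      calc Da * P = (star U * U) * Da * (star U * V) := by rw [hU2, Matrix.one_mul]
        _ = star U * (U * Da * star U) * V := by simp only [Matrix.mul_assoc]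
        _ = star U * (V * Db * star V) * V := by rw [h1]
        _ = (star U * V) * Db * (star V * V) := by simp only [Matrix.mul_assoc]
        _ = P * Db := by rw [hV2, Matrix.mul_one]
    by_cases hz : P i j = 0
    · exact Or.inl hz
    · right
      have := congrFun (congrFun hcomm i) j
      rw [hDadef, hDbdef, Matrix.diagonal_mul, Matrix.mul_diagonal] at this
      have h2 : ((a i : ℂ) - (b j : ℂ)) * P i j = 0 := by
        rw [sub_mul, this]
        ring
      rcases mul_eq_zero.mp h2 with h' | h'
      · have : ((a i : ℂ)) = ((b j : ℂ)) := sub_eq_zero.mp h'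
        exact_mod_cast this
      · exact absurd h' hz
  have heq_of_C : (∀ i j, P i j = 0 ∨ a i = b j) → ρ = σ := by
    intro hC
    have hcomm : Da * P = P * Db := by
      ext i j
      rw [hDadef, hDbdef, Matrix.diagonal_mul, Matrix.mul_diagonal]
      rcases hC i j with h | h
      · rw [h, mul_zero, zero_mul]
      · rw [h, mul_comm]
    have hAB : A = B := by
      have hVU : V = U * P := by
        rw [hPdef, ← Matrix.mul_assoc, hU1, Matrix.one_mul]
      have hDa : Da = P * Db * star P := by
        calc Da = Da * (P * star P) := by rw [hP1, Matrix.mul_one]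
          _ = (Da * P) * star P := (Matrix.mul_assoc _ _ _).symm
          _ = (P * Db) * star P := by rw [hcomm]
      rw [hAspec, hBspec, hVU, star_mul, hDa]
      simp only [Matrix.mul_assoc]
    have : (1 : Matrix (Fin d) (Fin d) ℂ) + ρ = 1 + σ := by rw [← hAdef, ← hBdef, hAB]
    exact add_left_cancel this
  have hS_of_C : (∀ i j, P i j = 0 ∨ a i = b j) → S = (d : ℝ) + 1 := by
    intro hC
    have : S = ∑ i, ∑ j, a i * nsq i j := by
      refine Finset.sum_congr rfl fun i _ => Finset.sum_congr rfl fun j _ => ?_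
      rcases hC i j with h | h
      · have : nsq i j = 0 := by rw [hnsqdef]; simpa [Complex.normSq_eq_zero] using h
        rw [this, mul_zero, mul_zero]
      · rw [← h, ← Real.rpow_add (ha i), add_sub_cancel, Real.rpow_one]
    rw [this]
    have : ∀ i, ∑ j, a i * nsq i j = a i := by
      intro i
      rw [← Finset.mul_sum, hrow i, mul_one]
    simp only [this]
    exact hsuma
  have hC_of_S : S = (d : ℝ) + 1 → ∀ i j, P i j = 0 ∨ a i = b j := by
    intro hS
    set T : ℝ := ∑ i, ∑ j, (α * a i + (1 - α) * b j) * nsq i j with hTdef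
    have hT : T = (d : ℝ) + 1 := by
      rw [hTdef]
      have : ∀ i j, (α * a i + (1 - α) * b j) * nsq i j
          = α * (a i * nsq i j) + (1 - α) * (b j * nsq i j) := by intros; ring
      simp only [this, Finset.sum_add_distrib]
      rw [← Finset.sum_add_distrib]
      have h1 : ∑ i, ∑ j, α * (a i * nsq i j) = α * ((d : ℝ) + 1) := by
        rw [← hsuma, Finset.mul_sum]
        refine Finset.sum_congr rfl fun i _ => ?_
        rw [← Finset.mul_sum, ← Finset.mul_sum, hrow i, mul_one]
      have h2 : ∑ i, ∑ j, (1 - α) * (b j * nsq i j) = (1 - α) * ((d : ℝ) + 1) := by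
        rw [Finset.sum_comm, ← hsumb, Finset.mul_sum]
        refine Finset.sum_congr rfl fun j _ => ?_
        rw [← Finset.mul_sum, ← Finset.mul_sum, hcol j, mul_one]
      rw [Finset.sum_add_distrib, h1, h2]
      ring
    have hle : ∀ p : Fin d × Fin d,
        (a p.1 ^ α * b p.2 ^ (1 - α)) * nsq p.1 p.2
          ≤ (α * a p.1 + (1 - α) * b p.2) * nsq p.1 p.2 := fun p =>
      mul_le_mul_of_nonneg_right (young_le (ha p.1) (hb p.2) hα0 hα1) (hnsq p.1 p.2)
    have hsum_eq : ∑ p : Fin d × Fin d, (a p.1 ^ α * b p.2 ^ (1 - α)) * nsq p.1 p.2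
        = ∑ p : Fin d × Fin d, (α * a p.1 + (1 - α) * b p.2) * nsq p.1 p.2 := by
      rw [Fintype.sum_prod_type, Fintype.sum_prod_type, ← hSdef, ← hTdef, hS, hT]
    have hall := (Finset.sum_eq_sum_iff_of_le (fun p _ => hle p)).mp hsum_eq
    intro i j
    by_cases hz : P i j = 0
    · exact Or.inl hz
    · right
      have h := hall ⟨i, j⟩ (Finset.mem_univ _)
      have hnz : nsq i j ≠ 0 := by
        rw [hnsqdef]
        simpa [Complex.normSq_eq_zero] using hz
      have := mul_right_cancel₀ hnz h
      exact (young_eq_iff (ha i) (hb j) hα0 hα1).mp this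
  constructor
  · intro h
    have hS : S = (d : ℝ) + 1 := by
      have : ((S : ℝ) : ℂ) = (((d : ℝ) + 1 : ℝ) : ℂ) := by push_cast; rw [h]
      exact_mod_cast this
    exact heq_of_C (hC_of_S hS)
  · intro h
    have hS := hS_of_C (hC_of_eq h)
    rw [hS]
    push_cast
    ring
end

section
/- Fix a natural number r ≥ 2 and work in the complex vector space of functions from bitstrings y : Fin(2(r−1)) → {0,1} to ℂ, with qubit positions labeled 1, …, 2(r−1). Let Ψ be the state obtained by applying, to the product of r−1 Bell pairs on position pairs (2i−1, 2i) for i = 1, …, r−1, a CNOT gate with control position 2k and target position 2k+1 for each k = 1, …, r−2; explicitly, Ψ(y) = 2^{−(r−1)/2} if y₁ = y₂ and y_{2i−1} = y_{2i} ⊕ y_{2i−2} for every i ∈ {2, …, r−1}, and Ψ(y) = 0 otherwise. Then Ψ = Σ_{b : Fin(r−2) → {0,1}} 2^{−(r−2)/2} · C_b(Γ_b), where: Γ_b is the function whose value at y is 2^{−1/2} if there exists x ∈ {0,1} with y₁ = y₂ = x, y_{2i−1} = b_{i−1} for every i ∈ {2, …, r−1}, and y_{2i} = x for every i ∈ {2,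 …, r−1} (i.e., Γ_b is the 2^{−1/2}-normalized GHZ state on positions 1, 2, 4, 6, …, 2(r−1) tensored with the computational basis state b on positions 3, 5, …, 2r−3), and 0 otherwise; and C_b is the linear map flipping, for each i ∈ {2, …, r−1} with b₁ ⊕ b₂ ⊕ ⋯ ⊕ b_{i−1} = 1, the bit at position 2i of the argument (a tensor product of Pauli-X corrections X^{b₁⊕⋯⊕b_{i−1}} on position 2i). -/
private lemma zmod2_sum_if_le_zero {m : ℕ} (A : Fin m → ZMod 2) (j : Fin m) (hj : (j:ℕ) = 0) :
    (∑ t : Fin m, if t ≤ j then A t else 0) = A j := by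
  have h : ∀ t : Fin m, (if t ≤ j then A t else 0) = (if t = j then A t else 0) := by
    intro t
    have he : (t ≤ j) ↔ (t = j) := by
      rw [Fin.le_def, Fin.ext_iff]; omega
    simp only [he]
  rw [Finset.sum_congr rfl (fun t _ => h t)]
  simp

private lemma zmod2_sum_if_le_succ {m : ℕ} (A : Fin m → ZMod 2) (j j' : Fin m)
    (hj : (j:ℕ) = (j':ℕ) + 1) :
    (∑ t : Fin m, if t ≤ j then A t else 0)
      = (∑ t : Fin m, if t ≤ j' then A t else 0) + A j := by
  have h : ∀ t : Fin m, (if t ≤ j then A t else 0)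
      = (if t ≤ j' then A t else 0) + (if t = j then A t else 0) := by
    intro t
    by_cases h1 : t ≤ j'
    · have h2 : ¬ (t = j) := by
        rw [Fin.le_def] at h1; rw [Fin.ext_iff]; omega
      have h3 : t ≤ j := by
        rw [Fin.le_def] at h1 ⊢; omega
      simp [h1, h2, h3]
    · by_cases h2 : t = j
      · subst h2
        simp [h1]
      · have h3 : ¬ t ≤ j := by
          rw [Fin.le_def] at h1 ⊢; rw [Fin.ext_iff] at h2; omega
        simp [h1, h2, h3]
  rw [Finset.sum_congr rfl (fun t _ => h t), Finset.sum_add_distrib]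
  simp

private lemma zaux1 : ∀ a a' c p x : ZMod 2, a' = a → a = c + p → x = p → c + a' = x := by decide
private lemma zaux2 : ∀ a a' c c' s x : ZMod 2,
    a' = a → a = c + c' → c' + s = x → c + (s + a') = x := by decide
private lemma zaux3 : ∀ a a' c x p : ZMod 2, a' = a → c + a' = x → p = x → a = c + p := by decide
private lemma zaux4 : ∀ a a' c c' s x : ZMod 2,
    a' = a → c + (s + a') = x → c' + s = x → a = c + c' := by decide

/-- Shor-style GHZ preparation: the state `Ψ` obtained by applying CNOTs between consecutive
Bell pairs equals the superposition over measurement outcomes `b` of the Pauli-X-corrected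
GHZ states `C_b(Γ_b)`, i.e. `Ψ = Σ_b 2^{−(r−2)/2} · C_b(Γ_b)`.

Qubits are `1`-based positions `1, …, 2(r−1)` in the paper, encoded here as `0`-based indices
`0, …, 2(r−1)−1` of `Fin (2*(r-1))`; bits are elements of `ZMod 2` (so `⊕` is `+`); a state is
a complex amplitude function on bitstrings; the correction `C_b` acts by precomposition with
addition of the mask flipping position `2i` (index `2i−1 = 2j+3` for `i = j+2`) exactly when
`b₁ ⊕ ⋯ ⊕ b_{i−1} = 1`. -/
theorem ghz_prep_state_eq_corrected_ghz_superposition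
    (r : ℕ) (hr : 2 ≤ r)
    (Ψ : (Fin (2 * (r - 1)) → ZMod 2) → ℂ)
    (hΨ : ∀ y, Ψ y =
      if y ⟨0, by omega⟩ = y ⟨1, by omega⟩ ∧
          ∀ j : Fin (r - 2),
            y ⟨2 * (j : ℕ) + 2, by omega⟩ =
              y ⟨2 * (j : ℕ) + 3, by omega⟩ + y ⟨2 * (j : ℕ) + 1, by omega⟩
        then ((((Real.sqrt 2) ^ (r - 1))⁻¹ : ℝ) : ℂ) else 0)
    (Γ : (Fin (r - 2) → ZMod 2) → (Fin (2 * (r - 1)) → ZMod 2) → ℂ)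
    (hΓ : ∀ b y, Γ b y =
      if ∃ x : ZMod 2, y ⟨0, by omega⟩ = x ∧ y ⟨1, by omega⟩ = x ∧
          ∀ j : Fin (r - 2),
            y ⟨2 * (j : ℕ) + 2, by omega⟩ = b j ∧ y ⟨2 * (j : ℕ) + 3, by omega⟩ = x
        then (((Real.sqrt 2)⁻¹ : ℝ) : ℂ) else 0)
    (mask : (Fin (r - 2) → ZMod 2) → Fin (2 * (r - 1)) → ZMod 2)
    (hmask : ∀ b p, mask b p =
      ∑ j : Fin (r - 2),
        if (p : ℕ) = 2 * (j : ℕ) + 3 then (∑ t : Fin (r - 2), if t ≤ j then b t else 0)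
        else 0) :
    ∀ y, Ψ y =
      ∑ b : Fin (r - 2) → ZMod 2,
        ((((Real.sqrt 2) ^ (r - 2))⁻¹ : ℝ) : ℂ) * Γ b (fun p => y p + mask b p) := by
  intro y
  classical
  set b₀ : Fin (r-2) → ZMod 2 := fun j => y ⟨2*(j:ℕ)+2, by omega⟩ with hb₀
  have hb0j : ∀ j : Fin (r-2), b₀ j = y ⟨2*(j:ℕ)+2, by omega⟩ := fun j => rfl
  -- mask evaluation lemmas
  have maskeven : ∀ (b : Fin (r-2) → ZMod 2) (i : ℕ) (hi : i < 2*(r-1)),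
      (i % 2 = 0 ∨ i = 1) → mask b ⟨i, hi⟩ = 0 := by
    intro b i hi h
    rw [hmask]
    apply Finset.sum_eq_zero
    intro t _
    exact if_neg (show ¬ i = 2*(t:ℕ)+3 by omega)
  have maskodd : ∀ (b : Fin (r-2) → ZMod 2) (j : Fin (r-2)) (hj : 2*(j:ℕ)+3 < 2*(r-1)),
      mask b ⟨2*(j:ℕ)+3, hj⟩ = ∑ t : Fin (r-2), if t ≤ j then b t else 0 := by
    intro b j hj
    rw [hmask, Finset.sum_eq_single_of_mem j (Finset.mem_univ j)
      (fun t _ ht => if_neg (show ¬ (2*(j:ℕ)+3) = 2*(t:ℕ)+3 by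
        have hv : (t:ℕ) ≠ (j:ℕ) := fun hc => ht (Fin.ext hc); omega))]
    exact if_pos rfl
  -- forward direction: CNOT relations imply cumulative-sum relations
  have fwd : y ⟨0, by omega⟩ = y ⟨1, by omega⟩ →
      (∀ j : Fin (r-2), y ⟨2*(j:ℕ)+2, by omega⟩ =
        y ⟨2*(j:ℕ)+3, by omega⟩ + y ⟨2*(j:ℕ)+1, by omega⟩) →
      ∀ k, ∀ hk : k < r - 2,
        y ⟨2*k+3, by omega⟩ +
            (∑ t : Fin (r-2), if t ≤ (⟨k, hk⟩ : Fin (r-2)) then b₀ t else 0)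
          = y ⟨0, by omega⟩ := by
    intro h0 h2 k
    induction k with
    | zero =>
      intro hk
      rw [zmod2_sum_if_le_zero b₀ ⟨0, hk⟩ rfl]
      exact zaux1 _ _ _ _ _ (hb0j ⟨0, hk⟩) (h2 ⟨0, hk⟩) h0
    | succ k ih =>
      intro hk
      have hk' : k < r - 2 := by omega
      rw [zmod2_sum_if_le_succ b₀ ⟨k+1, hk⟩ ⟨k, hk'⟩ rfl]
      exact zaux2 _ _ _ _ _ _ (hb0j ⟨k+1, hk⟩) (h2 ⟨k+1, hk⟩) (ih hk')
  -- collapse the sum to the single surviving term b₀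
  have hside : ∀ b ∈ (Finset.univ : Finset (Fin (r-2) → ZMod 2)), b ≠ b₀ →
      ((((Real.sqrt 2) ^ (r - 2))⁻¹ : ℝ) : ℂ) * Γ b (fun p => y p + mask b p) = 0 := by
    intro b _ hb
    rw [hΓ, if_neg, mul_zero]
    rintro ⟨x, -, -, hj⟩
    apply hb
    funext j
    have h := (hj j).1
    rw [maskeven b (2*(j:ℕ)+2) (by omega) (Or.inl (by omega)), add_zero] at h
    rw [hb0j j]
    exact h.symm
  rw [hΨ y, Finset.sum_eq_single b₀ hside (fun h => absurd (Finset.mem_univ b₀) h), hΓ]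
  split_ifs with h1 h2 h3
  · -- both conditions hold: amplitude bookkeeping
    have hpow : Real.sqrt 2 ^ (r - 1) = Real.sqrt 2 ^ (r - 2) * Real.sqrt 2 := by
      rw [← pow_succ]
      congr 1
      omega
    rw [hpow, mul_inv]
    push_cast
    ring
  · -- Ψ-condition holds but Γ-condition fails: contradiction
    exfalso
    apply h2
    refine ⟨y ⟨0, by omega⟩, ?_, ?_, ?_⟩
    · rw [maskeven b₀ 0 (by omega) (Or.inl rfl), add_zero]
    · rw [maskeven b₀ 1 (by omega) (Or.inr rfl), add_zero]
      exact h1.1.symm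
    · intro j
      refine ⟨?_, ?_⟩
      · rw [maskeven b₀ (2*(j:ℕ)+2) (by omega) (Or.inl (by omega)), add_zero]
      · rw [maskodd b₀ j (by omega)]
        exact fwd h1.1 h1.2 (j : ℕ) j.2
  · -- Γ-condition holds but Ψ-condition fails: contradiction
    exfalso
    apply h1
    obtain ⟨x, hx0, hx1, hj⟩ := h3
    rw [maskeven b₀ 0 (by omega) (Or.inl rfl), add_zero] at hx0
    rw [maskeven b₀ 1 (by omega) (Or.inr rfl), add_zero] at hx1
    have hS : ∀ j : Fin (r - 2),
        y ⟨2*(j:ℕ)+3, by omega⟩ + (∑ t : Fin (r-2), if t ≤ j then b₀ t else 0) = x := by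
      intro j
      have h := (hj j).2
      rwa [maskodd b₀ j (by omega)] at h
    refine ⟨hx0.trans hx1.symm, ?_⟩
    intro j
    obtain ⟨jv, hlt⟩ := j
    cases jv with
    | zero =>
      have h := hS ⟨0, hlt⟩
      rw [zmod2_sum_if_le_zero b₀ ⟨0, hlt⟩ rfl] at h
      exact zaux3 _ _ _ _ _ (hb0j ⟨0, hlt⟩) h hx1
    | succ k =>
      have hk' : k < r - 2 := by omega
      have h := hS ⟨k+1, hlt⟩
      rw [zmod2_sum_if_le_succ b₀ ⟨k+1, hlt⟩ ⟨k, hk'⟩ rfl] at h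
      exact zaux4 _ _ _ _ _ _ (hb0j ⟨k+1, hlt⟩) h (hS ⟨k, hk'⟩)
  · rw [mul_zero]
end
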